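/- Let e : ZFSet ≃ ZFSet be a permutation of the universe of ZFC sets that fixes every finite set, i.e., e s = s whenever s.toSet is finite. Then for all f M N : ZFSet, the π-translation of 'f is a function from M to N' holds if and only if ZFSet.IsFunc (e M) (e N) (e f); explicitly: [(for every z ∈ e f there exist x ∈ e M and y ∈ e N with z = e.symm {e.symm {x}, e.symm {x, y}}) and (for every x ∈ e M there exists a unique y with e.symm {e.symm {x}, e.symm {x, y}} ∈ e f)] if and only if e f is a function from e M to e N in the standard sense (e f ⊆ (e M).prod (e N) and for every x ∈ e M there is a unique y with ZFSet.pair x y ∈ e f). -/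

import Mathlib

/-! Since `e`, and hence `e.symm`, fixes finite sets, it fixes the singletons and unordered pairs
from which a Kuratowski pair is built. So the π-translated pair `e.symm {e.symm {x}, e.symm {x, y}}`
is just `pair x y`, and the two sides of the equivalence say the same thing. -/

namespace ZFSet

theorem finite_toSet_singleton (x : ZFSet) : ({x} : ZFSet).toSet.Finite := by
  change ((({x} : ZFSet)) : Set ZFSet).Finite
  simp

theorem finite_toSet_pair (x y : ZFSet) : ({x, y} : ZFSet).toSet.Finite := by
  change ((({x, y} : ZFSet)) : Set ZFSet).Finite
  simp

theorem subset_prod_iff {f M N : ZFSet} :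
    f ⊆ M.prod N ↔ ∀ z ∈ f, ∃ x ∈ M, ∃ y ∈ N, z = pair x y := by
  simp only [subset_def, mem_prod]

theorem symm_apply_kuratowski_eq_pair (e : ZFSet ≃ ZFSet)
    (he : ∀ s : ZFSet, s.toSet.Finite → e s = s) (x y : ZFSet) :
    e.symm {e.symm {x}, e.symm {x, y}} = pair x y := by
  have hsymm : ∀ s : ZFSet, s.toSet.Finite → e.symm s = s := fun s hs =>
    e.symm_apply_eq.2 (he s hs).symm
  rw [hsymm _ (finite_toSet_singleton x), hsymm _ (finite_toSet_pair x y),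
    hsymm _ (finite_toSet_pair _ _), pair]

end ZFSet

/-- **Lemma 3.4(iii)**: If a permutation `e` of the universe of ZFC sets fixes every
finite set, then the π-translation of "`f` is a function from `M` to `N`" holds iff
`e f` is a function from `e M` to `e N` in the standard sense. -/
theorem pi_function_absolute (e : ZFSet ≃ ZFSet)
    (he : ∀ s : ZFSet, s.toSet.Finite → e s = s) :
    ∀ f M N : ZFSet,
      ((∀ z ∈ e f, ∃ x ∈ e M, ∃ y ∈ e N, z = e.symm {e.symm {x}, e.symm {x, y}}) ∧
        ∀ x ∈ e M, ∃! y : ZFSet, e.symm {e.symm {x}, e.symm {x, y}} ∈ e f) ↔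
      ZFSet.IsFunc (e M) (e N) (e f) := by
  intro f M N
  simp only [ZFSet.symm_apply_kuratowski_eq_pair e he]
  exact ZFSet.subset_prod_iff.symm.and Iff.rfl
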